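/- arXiv:1202.5407 — 3 statements merged into one kernel-verified Lean document; each statement's English description precedes it below -/
import Mathlib

section
/- For every continuously differentiable map M_f : [ω_*, ω^*] → S², there exists a continuously differentiable map R : [ω_*, ω^*] → SO(3) (real 3×3 special orthogonal matrices) such that R(ω) M_f(ω) = −e₃ for every ω ∈ [ω_*, ω^*], and moreover ‖R(ω)‖ = 1 and ‖R′(ω)‖ = ‖M_f′(ω)‖ for every ω ∈ [ω_*, ω^*] (where ‖·‖ on matrices is the operator norm); in particular ∫_{ω_*}^{ω^*}(‖R(ω)‖² + ‖R′(ω)‖²) dω ≤ ∫_{ω_*}^{ω^*}(‖M_f(ω)‖² + ‖M_f′(ω)‖²) dω. -/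
noncomputable section

open scoped RealInnerProductSpace
open Matrix Set Filter

attribute [local instance] Matrix.normedAddCommGroup Matrix.normedSpace

/-- ℝ³ with the Euclidean norm. -/
abbrev E3 : Type := EuclideanSpace ℝ (Fin 3)

/-- First canonical basis vector of ℝ³. -/
def e1 : E3 := EuclideanSpace.single 0 1
/-- Second canonical basis vector of ℝ³. -/
def e2 : E3 := EuclideanSpace.single 1 1
/-- Third canonical basis vector of ℝ³. -/
def e3 : E3 := EuclideanSpace.single 2 1

/-- Cross (wedge) product on ℝ³. -/
def cross (x y : E3) : E3 :=
  (WithLp.equiv 2 (Fin 3 → ℝ)).symm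
    (crossProduct ((WithLp.equiv 2 (Fin 3 → ℝ)) x) ((WithLp.equiv 2 (Fin 3 → ℝ)) y))

/-- Action of a 3×3 real matrix on ℝ³. -/
def act (A : Matrix (Fin 3) (Fin 3) ℝ) (x : E3) : E3 := Matrix.toEuclideanLin A x

/-- Operator norm of a 3×3 real matrix w.r.t. the Euclidean norm. -/
def opNorm (A : Matrix (Fin 3) (Fin 3) ℝ) : ℝ :=
  ‖(LinearMap.toContinuousLinearMap (Matrix.toEuclideanLin A))‖

/-- `A ∈ SO(3)`. -/
def IsSO (A : Matrix (Fin 3) (Fin 3) ℝ) : Prop := Aᵀ * A = 1 ∧ A.det = 1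

open scoped NNReal

/-!
The rotation is a parallel transport along `M_f`. With the angular velocity
`Ω = [M_f × M_f']_×`, solve the linear equation `U' = -U Ω` starting from a rotation that sends
`M_f(ω_*)` to `-e₃`. Since `Ω` is skew-adjoint, `U Uᵀ` is constant, so `U` stays orthogonal, and by
continuity its determinant stays `1`. Since `M_f ⊥ M_f'` and `|M_f| = 1`, `Ω M_f = M_f'`, hence
`(U M_f)' = 0` and `U M_f = -e₃` throughout. Finally `‖U'‖ = ‖Ω‖ = |M_f × M_f'| = |M_f'|`, so the
integral inequality is in fact an equality. The linear equation is solved on the whole interval by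
gluing Picard–Lindelöf solutions on steps of a length that does not depend on the initial value.
-/

section Calculus

variable {F : Type*} [NormedAddCommGroup F] [NormedSpace ℝ F]

theorem constant_of_hasDerivWithinAt_Icc_zero {f : ℝ → F} {a b : ℝ}
    (hf : ∀ t ∈ Icc a b, HasDerivWithinAt f 0 (Icc a b) t) : ∀ t ∈ Icc a b, f t = f a :=
  constant_of_has_deriv_right_zero (fun t ht ↦ (hf t ht).continuousWithinAt) fun t ht ↦
    (hf t (Ico_subset_Icc_self ht)).mono_of_mem_nhdsWithin (Icc_mem_nhdsGE_of_mem ht)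

theorem inner_eq_zero_of_hasDerivWithinAt_of_norm_eq_one {G : Type*} [NormedAddCommGroup G]
    [InnerProductSpace ℝ G] {f f' : ℝ → G} {a b : ℝ} (hab : a < b)
    (hf : ∀ t ∈ Icc a b, HasDerivWithinAt f (f' t) (Icc a b) t)
    (hnorm : ∀ t ∈ Icc a b, ‖f t‖ = 1) : ∀ t ∈ Icc a b, ⟪f t, f' t⟫ = 0 := by
  intro t ht
  have h₁ := (hf t ht).inner ℝ (hf t ht)
  have h₂ : HasDerivWithinAt (fun s ↦ ⟪f s, f s⟫) 0 (Icc a b) t :=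
    (hasDerivWithinAt_const t _ 1).congr (fun s hs ↦ by simp [hnorm s hs]) (by simp [hnorm t ht])
  have := (uniqueDiffOn_Icc hab t ht).eq_deriv _ h₁ h₂
  rw [real_inner_comm (f' t)] at this ⊢
  linarith

theorem hasDerivWithinAt_Icc_of_Icc_of_Icc {f : ℝ → F} {f' : F} {a c d t : ℝ}
    (hac : a ≤ c) (hcd : c ≤ d)
    (h₁ : t ∈ Icc a c → HasDerivWithinAt f f' (Icc a c) t)
    (h₂ : t ∈ Icc c d → HasDerivWithinAt f f' (Icc c d) t) :
    HasDerivWithinAt f f' (Icc a d) t := by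
  have of_closed {s : Set ℝ} (hs : IsClosed s) (h : t ∈ s → HasDerivWithinAt f f' s t) :
      HasDerivWithinAt f f' s t := by
    by_cases ht : t ∈ s
    · exact h ht
    · exact hasDerivWithinAt_iff_hasFDerivWithinAt.2 (.of_notMem_closure (by rwa [hs.closure_eq]))
  rw [← Icc_union_Icc_eq_Icc hac hcd]
  exact (of_closed isClosed_Icc h₁).union (of_closed isClosed_Icc h₂)

theorem exists_eqOn_forall_mem_Icc_hasDerivWithinAt_of_glue {v : ℝ → F → F} {f g : ℝ → F}
    {a c d : ℝ} (hac : a ≤ c) (hcd : c ≤ d)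
    (hf : ∀ t ∈ Icc a c, HasDerivWithinAt f (v t (f t)) (Icc a c) t)
    (hg : ∀ t ∈ Icc c d, HasDerivWithinAt g (v t (g t)) (Icc c d) t) (hfg : f c = g c) :
    ∃ h : ℝ → F, EqOn h f (Icc a c) ∧
      ∀ t ∈ Icc a d, HasDerivWithinAt h (v t (h t)) (Icc a d) t := by
  set h : ℝ → F := fun t ↦ if t ≤ c then f t else g t
  have hhf : EqOn h f (Icc a c) := fun t ht ↦ if_pos ht.2
  have hhg : EqOn h g (Icc c d) := by
    intro t ht
    rcases ht.1.eq_or_lt with rfl | hct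
    · simp [h, hfg]
    · exact if_neg hct.not_ge
  refine ⟨h, hhf, fun t _ ↦ hasDerivWithinAt_Icc_of_Icc_of_Icc hac hcd (fun ht ↦ ?_) fun ht ↦ ?_⟩
  · exact hhf ht ▸ (hf t ht).congr hhf (hhf ht)
  · exact hhg ht ▸ (hg t ht).congr hhg (hhg ht)

theorem mul_star_self_eq_of_hasDerivWithinAt {𝔸 : Type*} [NormedRing 𝔸] [NormedAlgebra ℝ 𝔸]
    [StarRing 𝔸] [StarModule ℝ 𝔸] [ContinuousStar 𝔸] {U Ω : ℝ → 𝔸} {a b : ℝ}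
    (hU : ∀ t ∈ Icc a b, HasDerivWithinAt U (-(U t * Ω t)) (Icc a b) t)
    (hΩ : ∀ t ∈ Icc a b, star (Ω t) = -Ω t) :
    ∀ t ∈ Icc a b, U t * star (U t) = U a * star (U a) := by
  refine constant_of_hasDerivWithinAt_Icc_zero fun t ht ↦
    ((hU t ht).mul (hU t ht).star).congr_deriv ?_
  simp [star_mul, hΩ t ht, mul_assoc]

end Calculus

section LinearODE

variable {F : Type*} [NormedAddCommGroup F] [NormedSpace ℝ F] [CompleteSpace F]

theorem exists_eq_forall_mem_Icc_hasDerivWithinAt_linear_of_mul_le {A : ℝ → F →L[ℝ] F}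
    {K : ℝ≥0} {c d : ℝ} (hcd : c ≤ d) (hA : ContinuousOn A (Icc c d))
    (hK : ∀ t ∈ Icc c d, ‖A t‖ ≤ K) (hKcd : K * (d - c) ≤ 1 / 2) (y : F) :
    ∃ x : ℝ → F, x c = y ∧ ∀ t ∈ Icc c d, HasDerivWithinAt x (A t (x t)) (Icc c d) t := by
  -- On the ball of radius `‖y‖` about `y` the field is bounded by `2 K ‖y‖`, so the length
  -- condition of Picard–Lindelöf reduces to `K (d - c) ≤ 1 / 2`, whatever `y` is.
  have hpl : IsPicardLindelof (fun t ↦ A t) (⟨c, left_mem_Icc.2 hcd⟩ : Icc c d) y ‖y‖₊ 0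
      (2 * K * ‖y‖₊) K := by
    refine ⟨fun t ht ↦ ((A t).lipschitz.weaken ?_).lipschitzOnWith,
      fun x _ ↦ hA.clm_apply continuousOn_const, fun t ht x hx ↦ ?_, ?_⟩
    · exact_mod_cast hK t ht
    · have hx' : ‖x‖ ≤ 2 * ‖y‖ := by
        have := norm_le_norm_add_norm_sub' x y
        have := mem_closedBall_iff_norm.1 hx
        simp only [coe_nnnorm] at this
        linarith
      calc ‖A t x‖ ≤ ‖A t‖ * ‖x‖ := (A t).le_opNorm x
        _ ≤ K * (2 * ‖y‖) := mul_le_mul (hK t ht) hx' (norm_nonneg _) K.2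
        _ = _ := by push_cast; ring
    · rw [max_eq_left (by simpa using hcd)]
      push_cast
      nlinarith [norm_nonneg y]
  exact hpl.exists_eq_forall_mem_Icc_hasDerivWithinAt₀

theorem exists_eq_forall_mem_Icc_hasDerivWithinAt_linear {A : ℝ → F →L[ℝ] F} {a b : ℝ}
    (hab : a ≤ b) (hA : ContinuousOn A (Icc a b)) (x₀ : F) :
    ∃ x : ℝ → F, x a = x₀ ∧ ∀ t ∈ Icc a b, HasDerivWithinAt x (A t (x t)) (Icc a b) t := by
  obtain ⟨C, hC⟩ := isCompact_Icc.exists_bound_of_continuousOn hA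
  set K : ℝ≥0 := C.toNNReal
  have hK : ∀ t ∈ Icc a b, ‖A t‖ ≤ K := fun t ht ↦ (hC t ht).trans (Real.le_coe_toNNReal C)
  set δ : ℝ := 1 / (2 * (K + 1))
  have hδ : 0 < δ := by positivity
  have hKδ : K * δ ≤ 1 / 2 := by
    rw [mul_one_div, div_le_div_iff₀ (by positivity) two_pos]; nlinarith
  have step (n : ℕ) : ∃ x : ℝ → F, x a = x₀ ∧ ∀ t ∈ Icc a (min (a + n * δ) b),
      HasDerivWithinAt x (A t (x t)) (Icc a (min (a + n * δ) b)) t := by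
    induction n with
    | zero =>
      simp only [CharP.cast_eq_zero, zero_mul, add_zero, min_eq_left hab]
      exact exists_eq_forall_mem_Icc_hasDerivWithinAt_linear_of_mul_le le_rfl
        (hA.mono (Icc_subset_Icc le_rfl hab)) (fun t ht ↦ hK t ⟨ht.1, ht.2.trans hab⟩)
        (by simp) x₀
    | succ n ih =>
      obtain ⟨x, hx₀, hx⟩ := ih
      set c := min (a + n * δ) b
      set c' := min (a + (n + 1 : ℕ) * δ) b
      have hac : a ≤ c := le_min (by nlinarith [n.cast_nonneg (α := ℝ)]) hab
      have hcc' : c ≤ c' := min_le_min_right b (by push_cast; linarith)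
      have hc'c : c' ≤ c + δ := by
        rw [← min_add_add_right]; exact min_le_min (by push_cast; linarith) (by linarith)
      have hsub : Icc c c' ⊆ Icc a b := Icc_subset_Icc hac (min_le_right _ _)
      obtain ⟨y, hyc, hy⟩ := exists_eq_forall_mem_Icc_hasDerivWithinAt_linear_of_mul_le hcc'
        (hA.mono hsub) (fun t ht ↦ hK t (hsub ht))
        (hKδ.trans' (mul_le_mul_of_nonneg_left (by linarith) K.2)) (x c)
      obtain ⟨z, hzx, hz⟩ :=
        exists_eqOn_forall_mem_Icc_hasDerivWithinAt_of_glue hac hcc' hx hy hyc.symm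
      exact ⟨z, (hzx ⟨le_rfl, hac⟩).trans hx₀, hz⟩
  obtain ⟨n, hn⟩ := exists_nat_ge ((b - a) / δ)
  obtain ⟨x, hx₀, hx⟩ := step n
  rw [min_eq_right (by rw [div_le_iff₀ hδ] at hn; linarith)] at hx
  exact ⟨x, hx₀, hx⟩

end LinearODE

section CrossProduct

theorem norm_cross_le (x y : E3) : ‖cross x y‖ ≤ ‖x‖ * ‖y‖ := by
  calc ‖cross x y‖ = ‖x‖ * ‖y‖ * Real.sin (InnerProductGeometry.angle x y) :=
        InnerProductGeometry.norm_ofLp_crossProduct x y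
    _ ≤ ‖x‖ * ‖y‖ := mul_le_of_le_one_right (by positivity) (Real.sin_le_one _)

def crossL : E3 →L[ℝ] E3 →L[ℝ] E3 :=
  let e := WithLp.linearEquiv 2 ℝ (Fin 3 → ℝ)
  LinearMap.mkContinuous₂ ((crossProduct.compl₁₂ e.toLinearMap e.toLinearMap).compr₂
    e.symm.toLinearMap) 1 fun x y ↦ (norm_cross_le x y).trans_eq (by ring)

@[simp]
theorem crossL_apply (w x : E3) : crossL w x = cross w x := by
  simp only [crossL]
  rfl

theorem inner_cross_left (w x y : E3) : ⟪cross w x, y⟫ = -⟪x, cross w y⟫ := by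
  simp only [cross, WithLp.equiv_apply, WithLp.equiv_symm_apply, PiLp.inner_apply,
    RCLike.inner_apply, conj_trivial, Fin.sum_univ_three, cross_apply, cons_val_zero, cons_val_one,
    cons_val]
  ring

theorem star_crossL (w : E3) : star (crossL w) = -crossL w := by
  rw [ContinuousLinearMap.star_eq_adjoint, eq_comm, ContinuousLinearMap.eq_adjoint_iff]
  intro x y
  rw [_root_.neg_apply, inner_neg_left, crossL_apply, crossL_apply,
    inner_cross_left, neg_neg]

theorem cross_cross_eq_of_inner_eq_zero {m v : E3} (hm : ‖m‖ = 1) (hmv : ⟪m, v⟫ = 0) :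
    cross (cross m v) m = v := by
  have hmm : WithLp.ofLp m ⬝ᵥ WithLp.ofLp m = 1 := by
    have : ⟪m, m⟫ = 1 := by rw [real_inner_self_eq_norm_sq, hm, one_pow]
    simpa only [EuclideanSpace.inner_eq_star_dotProduct, star_trivial] using this
  have hvm : WithLp.ofLp v ⬝ᵥ WithLp.ofLp m = 0 := by
    simpa only [EuclideanSpace.inner_eq_star_dotProduct, star_trivial] using hmv
  apply WithLp.ofLp_injective
  simp [cross, cross_cross_eq_smul_sub_smul, hmm, hvm]

theorem norm_crossL_cross {m v : E3} (hm : ‖m‖ = 1) (hmv : ⟪m, v⟫ = 0) :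
    ‖crossL (cross m v)‖ = ‖v‖ := by
  refine le_antisymm (ContinuousLinearMap.opNorm_le_bound _ (norm_nonneg v) fun x ↦ ?_) ?_
  · rw [crossL_apply]
    calc ‖cross (cross m v) x‖ ≤ ‖cross m v‖ * ‖x‖ := norm_cross_le _ _
      _ ≤ ‖v‖ * ‖x‖ := by gcongr; simpa [hm] using norm_cross_le m v
  · simpa [cross_cross_eq_of_inner_eq_zero hm hmv, hm] using (crossL (cross m v)).le_opNorm m

end CrossProduct

section Orthogonal

instance ContinuousLinearMap.isDedekindFiniteMonoid {𝕜 E : Type*} [NontriviallyNormedField 𝕜]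
    [NormedAddCommGroup E] [NormedSpace 𝕜 E] [FiniteDimensional 𝕜 E] :
    IsDedekindFiniteMonoid (E →L[𝕜] E) where
  mul_eq_one_symm {U V} h := by
    have : (V : Module.End 𝕜 E) * U = 1 := mul_eq_one_symm (by ext x; exact congr($h x))
    ext x
    exact congr($this x)

theorem toEuclideanCLM_mem_unitary_iff {n : Type*} [Fintype n] [DecidableEq n]
    (R : Matrix n n ℝ) :
    toEuclideanCLM (𝕜 := ℝ) R ∈ unitary (EuclideanSpace ℝ n →L[ℝ] EuclideanSpace ℝ n) ↔
      Rᵀ * R = 1 := by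
  rw [Unitary.mem_iff, ← map_star, ← map_mul, ← map_mul,
    ← map_one (toEuclideanCLM (n := n) (𝕜 := ℝ)), EquivLike.injective _ |>.eq_iff,
    EquivLike.injective _ |>.eq_iff, star_eq_conjTranspose, conjTranspose_eq_transpose_of_trivial]
  exact and_iff_left_of_imp mul_eq_one_comm.mp

theorem det_eq_one_of_continuousOn_of_transpose_mul_self {n : Type*} [Fintype n] [DecidableEq n]
    {R : ℝ → Matrix n n ℝ} {a b : ℝ} (hR : ContinuousOn R (Icc a b))
    (horth : ∀ t ∈ Icc a b, (R t)ᵀ * R t = 1) (ha : (R a).det = 1) :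
    ∀ t ∈ Icc a b, (R t).det = 1 := by
  have hsq : EqOn ((fun t ↦ (R t).det) ^ 2) 1 (Icc a b) := fun t ht ↦ by
    simpa [sq] using congrArg det (horth t ht)
  rcases isPreconnected_Icc.eq_one_or_eq_neg_one_of_sq_eq
    ((continuous_id.matrix_det).comp_continuousOn hR) hsq with h | h
  · exact h
  · intro t ht
    have := h (left_mem_Icc.2 (ht.1.trans ht.2))
    norm_num [ha] at this

theorem opNorm_eq_norm_toEuclideanCLM (A : Matrix (Fin 3) (Fin 3) ℝ) :
    opNorm A = ‖toEuclideanCLM (n := Fin 3) (𝕜 := ℝ) A‖ := rfl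

theorem act_eq_toEuclideanCLM_apply (A : Matrix (Fin 3) (Fin 3) ℝ) (x : E3) :
    act A x = toEuclideanCLM (n := Fin 3) (𝕜 := ℝ) A x := rfl

theorem exists_isSO_act_eq_neg_e3 {u : E3} (hu : ‖u‖ = 1) : ∃ R, IsSO R ∧ act R u = -e3 := by
  -- The reflection in `(u + e₃)ᗮ` sends `u` to `-e₃`; if its determinant is `-1`, compose it
  -- with `diag(-1, 1, 1)`, which fixes `e₃`.
  have he3 : ‖-e3‖ = 1 := by simp [e3]
  set ρ := (ℝ ∙ (u - -e3))ᗮ.reflection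
  set H := (toEuclideanCLM (n := Fin 3) (𝕜 := ℝ)).symm (ρ : E3 →L[ℝ] E3)
  have hHu : act H u = -e3 := by
    rw [act_eq_toEuclideanCLM_apply, StarAlgEquiv.apply_symm_apply]
    exact Submodule.reflection_sub (hu.trans he3.symm)
  have hH : Hᵀ * H = 1 := by
    rw [← toEuclideanCLM_mem_unitary_iff]
    simpa [H] using (Unitary.linearIsometryEquiv.symm ρ).2
  set D : Matrix (Fin 3) (Fin 3) ℝ := diagonal ![-1, 1, 1]
  have hD : Dᵀ * D = 1 := by
    rw [diagonal_transpose, diagonal_mul_diagonal, ← diagonal_one]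
    congr 1
    ext i
    fin_cases i <;> simp
  have hDe3 : act D (-e3) = -e3 := by
    rw [act_eq_toEuclideanCLM_apply]
    ext i
    fin_cases i <;> simp [D, e3, mulVec_diagonal]
  rcases sq_eq_one_iff.1 (by simpa [sq] using congrArg det hH : H.det ^ 2 = 1) with h | h
  · exact ⟨H, ⟨hH, h⟩, hHu⟩
  · refine ⟨D * H, ⟨?_, ?_⟩, ?_⟩
    · rw [transpose_mul, mul_assoc, ← mul_assoc Dᵀ, hD, one_mul, hH]
    · simp [D, h, det_diagonal, Fin.prod_univ_three]
    · rw [act_eq_toEuclideanCLM_apply, map_mul]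
      exact (congrArg _ hHu).trans hDe3

end Orthogonal

theorem exists_unitary_transport {Mf Mf' : ℝ → E3} {a b : ℝ} (hab : a < b)
    (hMf : ∀ t ∈ Icc a b, HasDerivWithinAt Mf (Mf' t) (Icc a b) t)
    (hMf' : ContinuousOn Mf' (Icc a b)) (hnorm : ∀ t ∈ Icc a b, ‖Mf t‖ = 1)
    {U₀ : E3 →L[ℝ] E3} (hU₀ : U₀ ∈ unitary (E3 →L[ℝ] E3)) :
    ∃ U U' : ℝ → E3 →L[ℝ] E3, U a = U₀ ∧
      (∀ t ∈ Icc a b, HasDerivWithinAt U (U' t) (Icc a b) t) ∧ ContinuousOn U' (Icc a b) ∧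
      (∀ t ∈ Icc a b, U t ∈ unitary (E3 →L[ℝ] E3)) ∧
      (∀ t ∈ Icc a b, U t (Mf t) = U₀ (Mf a)) ∧
      ∀ t ∈ Icc a b, ‖U' t‖ = ‖Mf' t‖ := by
  have horth := inner_eq_zero_of_hasDerivWithinAt_of_norm_eq_one hab hMf hnorm
  set Ω : ℝ → E3 →L[ℝ] E3 := fun t ↦ crossL (crossL (Mf t) (Mf' t))
  have hΩ : ContinuousOn Ω (Icc a b) :=
    crossL.continuous.comp_continuousOn <| (crossL.continuous.comp_continuousOn
      fun t ht ↦ (hMf t ht).continuousWithinAt).clm_apply hMf'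
  have hΩMf : ∀ t ∈ Icc a b, Ω t (Mf t) = Mf' t := fun t ht ↦ by
    simpa [Ω] using cross_cross_eq_of_inner_eq_zero (hnorm t ht) (horth t ht)
  obtain ⟨U, hUa, hU⟩ := exists_eq_forall_mem_Icc_hasDerivWithinAt_linear hab.le
    (A := fun t ↦ -(ContinuousLinearMap.compL ℝ E3 E3 E3).flip (Ω t))
    ((ContinuousLinearMap.compL ℝ E3 E3 E3).flip.continuous.comp_continuousOn hΩ).neg U₀
  have hU' : ∀ t ∈ Icc a b, HasDerivWithinAt U (-(U t * Ω t)) (Icc a b) t := hU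
  have hUΩ : ContinuousOn (fun t ↦ -(U t * Ω t)) (Icc a b) :=
    ((HasDerivWithinAt.continuousOn hU').mul hΩ).neg
  have hmul : ∀ t ∈ Icc a b, U t * star (U t) = 1 := fun t ht ↦ by
    rw [mul_star_self_eq_of_hasDerivWithinAt hU' (fun t _ ↦ star_crossL _) t ht, hUa]
    exact Unitary.mul_star_self_of_mem hU₀
  have hunit : ∀ t ∈ Icc a b, U t ∈ unitary (E3 →L[ℝ] E3) := fun t ht ↦
    Unitary.mem_iff.2 ⟨mul_eq_one_comm.mp (hmul t ht), hmul t ht⟩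
  have hUMf : ∀ t ∈ Icc a b, U t (Mf t) = U₀ (Mf a) := by
    have hderiv (t) (ht : t ∈ Icc a b) :
        HasDerivWithinAt (fun s ↦ U s (Mf s)) 0 (Icc a b) t := by
      refine ((hU' t ht).clm_apply (hMf t ht)).congr_deriv ?_
      change -U t (Ω t (Mf t)) + U t (Mf' t) = 0
      rw [hΩMf t ht, neg_add_cancel]
    intro t ht
    rw [constant_of_hasDerivWithinAt_Icc_zero hderiv t ht, hUa]
  refine ⟨U, fun t ↦ -(U t * Ω t), hUa, hU', hUΩ, hunit, hUMf, fun t ht ↦ ?_⟩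
  rw [norm_neg, CStarRing.norm_mem_unitary_mul _ (hunit t ht)]
  simpa [Ω] using norm_crossL_cross (hnorm t ht) (horth t ht)

/-- Proposition 1 of the paper: existence of a C¹ rotation-valued profile `R`
sending the target profile `M_f` to the south pole, with pointwise norm identities
and the resulting H¹-type integral bound. -/
theorem stmt0 (a b : ℝ) (hab : a < b)
    (Mf Mf' : ℝ → E3)
    (hMfderiv : ∀ ω ∈ Icc a b, HasDerivWithinAt Mf (Mf' ω) (Icc a b) ω)
    (hMf'cont : ContinuousOn Mf' (Icc a b))
    (hMfsphere : ∀ ω ∈ Icc a b, ‖Mf ω‖ = 1) :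
    ∃ R R' : ℝ → Matrix (Fin 3) (Fin 3) ℝ,
      (∀ ω ∈ Icc a b, HasDerivWithinAt R (R' ω) (Icc a b) ω) ∧
      ContinuousOn R' (Icc a b) ∧
      (∀ ω ∈ Icc a b, IsSO (R ω)) ∧
      (∀ ω ∈ Icc a b, act (R ω) (Mf ω) = -e3) ∧
      (∀ ω ∈ Icc a b, opNorm (R ω) = 1) ∧
      (∀ ω ∈ Icc a b, opNorm (R' ω) = ‖Mf' ω‖) ∧
      (∫ ω in a..b, (opNorm (R ω) ^ 2 + opNorm (R' ω) ^ 2))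
        ≤ ∫ ω in a..b, (‖Mf ω‖ ^ 2 + ‖Mf' ω‖ ^ 2) := by
  obtain ⟨R₀, hR₀, hR₀Mf⟩ := exists_isSO_act_eq_neg_e3 (hMfsphere a (left_mem_Icc.2 hab.le))
  obtain ⟨U, U', hUa, hU, hU', hunit, hUMf, hnormU'⟩ := exists_unitary_transport hab hMfderiv
    hMf'cont hMfsphere ((toEuclideanCLM_mem_unitary_iff R₀).2 hR₀.1)
  let T : (E3 →L[ℝ] E3) →L[ℝ] Matrix (Fin 3) (Fin 3) ℝ := LinearMap.toContinuousLinearMap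
    (toEuclideanCLM (n := Fin 3) (𝕜 := ℝ)).symm.toAlgEquiv.toLinearMap
  have hTU (ω : ℝ) : toEuclideanCLM (n := Fin 3) (𝕜 := ℝ) (T (U ω)) = U ω :=
    StarAlgEquiv.apply_symm_apply _ _
  have horth : ∀ ω ∈ Icc a b, (T (U ω))ᵀ * T (U ω) = 1 := fun ω hω ↦
    (toEuclideanCLM_mem_unitary_iff _).1 ((hTU ω).symm ▸ hunit ω hω)
  have hnorm : ∀ ω ∈ Icc a b, opNorm (T (U ω)) = 1 := fun ω hω ↦ by
    rw [opNorm_eq_norm_toEuclideanCLM, hTU]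
    exact CStarRing.norm_of_mem_unitary (hunit ω hω)
  have hnorm' : ∀ ω ∈ Icc a b, opNorm (T (U' ω)) = ‖Mf' ω‖ := fun ω hω ↦ by
    rw [opNorm_eq_norm_toEuclideanCLM, ← hnormU' ω hω]
    exact congrArg norm (StarAlgEquiv.apply_symm_apply _ _)
  refine ⟨fun ω ↦ T (U ω), fun ω ↦ T (U' ω),
    fun ω hω ↦ T.hasFDerivAt.comp_hasDerivWithinAt ω (hU ω hω), T.continuous.comp_continuousOn hU',
    fun ω hω ↦ ⟨horth ω hω, ?_⟩, fun ω hω ↦ ?_, hnorm, hnorm', ?_⟩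
  · refine det_eq_one_of_continuousOn_of_transpose_mul_self (T.continuous.comp_continuousOn
      (HasDerivWithinAt.continuousOn hU)) horth ?_ ω hω
    simpa [T, hUa] using hR₀.2
  · rw [act_eq_toEuclideanCLM_apply, hTU, hUMf ω hω, ← act_eq_toEuclideanCLM_apply, hR₀Mf]
  · refine le_of_eq (intervalIntegral.integral_congr fun ω hω ↦ ?_)
    rw [uIcc_of_le hab.le] at hω
    simp only [hnorm ω hω, hnorm' ω hω, hMfsphere ω hω]
end
end

section
/- Let ε ∈ {1, −1}, ω ∈ ℝ, let u₁, u₂ : I → ℝ be functions on an interval I, and let σ : I → ℝ be differentiable with σ′(t) = ε for all t ∈ I. If M₁ : I → ℝ³ is differentiable and satisfies M₁′(t) = (u₁(t) e₁ + u₂(t) e₂ + ε ω e₃) ∧ M₁(t) for all t ∈ I, then M₂(t) := exp(σ(t) ω S) M₁(t) satisfies M₂′(t) = Σ_{i=1}^{2} u_i(t) [exp(σ(t) ω S) e_i] ∧ M₂(t) for all t ∈ I, where exp is the matrix exponential. -/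
noncomputable section

open scoped RealInnerProductSpace
open Matrix Set Filter

attribute [local instance] Matrix.normedAddCommGroup Matrix.normedSpace

/-- The matrix S with rows (0,1,0), (−1,0,0), (0,0,0). -/
def Smat : Matrix (Fin 3) (Fin 3) ℝ := !![0,1,0; -1,0,0; 0,0,0]

/-- Matrix exponential. -/
def expm (A : Matrix (Fin 3) (Fin 3) ℝ) : Matrix (Fin 3) (Fin 3) ℝ := NormedSpace.exp A

/-! Since S³ = −S, the exponential series of θS collapses to Rodrigues' formula
exp(θS) = 1 + sin θ · S + (1 − cos θ) · S², the rotation by θ about e₃. A rotation commutes with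
the cross product and this one fixes e₃; moreover S v = −e₃ ∧ v. Differentiating exp(σωS) M₁ by the
product rule, the term εω · S exp(σωS) M₁ coming from σ′ = ε therefore cancels exactly the image
εω · e₃ ∧ exp(σωS) M₁ of the drift term of M₁′. -/

theorem pow_odd_of_pow_three_eq_neg {R : Type*} [Ring R] {X : R} (hX : X ^ 3 = -X) (k : ℕ) :
    X ^ (2 * k + 1) = (-1) ^ k * X := by
  induction k with
  | zero => simp
  | succ k ih =>
    calc X ^ (2 * (k + 1) + 1) = X ^ (2 * k + 1) * X ^ 2 := by rw [← pow_add]; ring_nf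
      _ = (-1) ^ k * X ^ 3 := by rw [ih, mul_assoc, ← pow_succ']
      _ = (-1) ^ (k + 1) * X := by rw [hX, pow_succ, mul_neg_one, mul_neg, neg_mul]

open scoped Nat in
theorem exp_smul_of_pow_three_eq_neg {𝔸 : Type*} [Ring 𝔸] [Algebra ℝ 𝔸] [TopologicalSpace 𝔸]
    [IsTopologicalRing 𝔸] [ContinuousSMul ℝ 𝔸] [T2Space 𝔸] {X : 𝔸} (hX : X ^ 3 = -X) (a : ℝ) :
    NormedSpace.exp (a • X) = 1 + Real.sin a • X + (1 - Real.cos a) • X ^ 2 := by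
  have hodd_pow (k : ℕ) : X ^ (2 * k + 1) = ((-1 : ℝ) ^ k) • X := by
    simp [pow_odd_of_pow_three_eq_neg hX, Algebra.smul_def]
  have heven_pow (k : ℕ) : X ^ (2 * (k + 1)) = ((-1 : ℝ) ^ k) • X ^ 2 := by
    rw [show 2 * (k + 1) = 2 * k + 1 + 1 by ring, pow_succ, hodd_pow, smul_mul_assoc, ← sq]
  set f : ℕ → 𝔸 := fun n => (n !⁻¹ : ℝ) • (a • X) ^ n
  have hodd : HasSum (fun k => f (2 * k + 1)) (Real.sin a • X) := by
    convert (Real.hasSum_sin a).smul_const X using 2 with k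
    simp only [f, smul_pow, hodd_pow, smul_smul]
    ring_nf
  have heven : HasSum (fun k => f (2 * k)) (1 + (1 - Real.cos a) • X ^ 2) := by
    convert ((Real.hasSum_cos a).smul_const (-X ^ 2)).add (hasSum_ite_eq 0 (1 + X ^ 2)) using 1
    · ext (_ | k)
      · simp [f]
      · simp only [f, smul_pow, heven_pow, smul_smul, if_neg k.succ_ne_zero, add_zero, smul_neg,
          ← neg_smul]
        ring_nf
    · module
  rw [NormedSpace.exp_eq_tsum ℝ]
  exact (heven.even_add_odd hodd).tsum_eq.trans (by abel)

theorem cross_mulVec_mulVec {R : Type*} [CommRing R] (A : Matrix (Fin 3) (Fin 3) R)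
    (x y : Fin 3 → R) : (A *ᵥ x) ⨯₃ (A *ᵥ y) = (adjugate A)ᵀ *ᵥ (x ⨯₃ y) := by
  ext i
  fin_cases i <;>
    simp [adjugate_fin_three, cross_apply, mulVec, dotProduct, Fin.sum_univ_three] <;> ring

theorem IsSO.adjugate_eq {A : Matrix (Fin 3) (Fin 3) ℝ} (hA : IsSO A) : adjugate A = Aᵀ := by
  rw [← inv_eq_left_inv hA.1, inv_def, hA.2, Ring.inverse_one, one_smul]

theorem IsSO.act_cross {A : Matrix (Fin 3) (Fin 3) ℝ} (hA : IsSO A) (x y : E3) :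
    act A (cross x y) = cross (act A x) (act A y) := by
  simp [act, cross, cross_mulVec_mulVec, hA.adjugate_eq]

theorem cross_add_left (x y z : E3) : cross (x + y) z = cross x z + cross y z := by
  simp [cross]

theorem cross_smul_left (c : ℝ) (x y : E3) : cross (c • x) y = c • cross x y := by
  simp [cross]

theorem act_add (A : Matrix (Fin 3) (Fin 3) ℝ) (x y : E3) : act A (x + y) = act A x + act A y :=
  map_add _ x y

theorem act_smul (A : Matrix (Fin 3) (Fin 3) ℝ) (c : ℝ) (x : E3) : act A (c • x) = c • act A x :=
  map_smul _ c x

theorem smul_act (c : ℝ) (A : Matrix (Fin 3) (Fin 3) ℝ) (x : E3) :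
    act (c • A) x = c • act A x := by
  simp [act]

theorem mul_act (A B : Matrix (Fin 3) (Fin 3) ℝ) (x : E3) : act (A * B) x = act A (act B x) := by
  simp [act]

theorem HasDerivWithinAt.act {A : ℝ → Matrix (Fin 3) (Fin 3) ℝ} {A' : Matrix (Fin 3) (Fin 3) ℝ}
    {x : ℝ → E3} {x' : E3} {s : Set ℝ} {t : ℝ} (hA : HasDerivWithinAt A A' s t)
    (hx : HasDerivWithinAt x x' s t) :
    HasDerivWithinAt (fun r => act (A r) (x r)) (act A' (x t) + act (A t) x') s t := by
  rw [add_comm]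
  exact (toEuclideanLin (𝕜 := ℝ) (m := Fin 3) (n := Fin 3)).toLinearMap.toContinuousBilinearMap
    |>.hasDerivWithinAt_of_bilinear hA hx

theorem act_Smat (v : E3) : act Smat v = -cross e3 v := by
  ext i
  fin_cases i <;> simp [act, cross, e3, Smat, cross_apply, mulVec, dotProduct, Fin.sum_univ_three]

theorem Smat_pow_three : Smat ^ 3 = -Smat := by
  ext i j
  fin_cases i <;> fin_cases j <;> simp [Smat, pow_succ, mul_apply, Fin.sum_univ_three]

def rotZ (a : ℝ) : Matrix (Fin 3) (Fin 3) ℝ :=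
  !![Real.cos a, Real.sin a, 0; -Real.sin a, Real.cos a, 0; 0, 0, 1]

theorem rotZ_eq_rodrigues (a : ℝ) :
    rotZ a = 1 + Real.sin a • Smat + (1 - Real.cos a) • Smat ^ 2 := by
  ext i j
  fin_cases i <;> fin_cases j <;> simp [rotZ, Smat, sq]

theorem expm_smul_Smat (a : ℝ) : expm (a • Smat) = rotZ a := by
  rw [expm, exp_smul_of_pow_three_eq_neg Smat_pow_three, rotZ_eq_rodrigues]

theorem isSO_rotZ (a : ℝ) : IsSO (rotZ a) := by
  constructor
  · ext i j
    fin_cases i <;> fin_cases j <;>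
      simp [rotZ, mul_apply, Fin.sum_univ_three, ← sq, one_apply, mul_comm]
  · simp [rotZ, det_fin_three, ← sq]

theorem act_rotZ_e3 (a : ℝ) : act (rotZ a) e3 = e3 := by
  ext i
  fin_cases i <;> simp [act, rotZ, e3, mulVec, dotProduct, Fin.sum_univ_three]

theorem hasDerivAt_rotZ (a : ℝ) : HasDerivAt rotZ (Smat * rotZ a) a := by
  rw [show rotZ = _ from funext rotZ_eq_rodrigues]
  refine ((((Real.hasDerivAt_sin a).smul_const Smat).const_add 1).fun_add
    (((Real.hasDerivAt_cos a).const_sub 1).smul_const (Smat ^ 2))).congr_deriv ?_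
  rw [mul_add, mul_add, mul_one, mul_smul_comm, mul_smul_comm, ← pow_succ', Smat_pow_three, ← sq]
  module

theorem stmt6_general (eps : ℝ) (ω : ℝ)
    (I : Set ℝ)
    (u1 u2 : ℝ → ℝ) (σ : ℝ → ℝ)
    (hσ : ∀ t ∈ I, HasDerivWithinAt σ eps I t)
    (M1 : ℝ → E3)
    (hM1 : ∀ t ∈ I, HasDerivWithinAt M1
      (cross (u1 t • e1 + u2 t • e2 + (eps * ω) • e3) (M1 t)) I t) :
    ∀ t ∈ I, HasDerivWithinAt (fun s => act (expm ((σ s * ω) • Smat)) (M1 s))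
      (u1 t • cross (act (expm ((σ t * ω) • Smat)) e1)
          (act (expm ((σ t * ω) • Smat)) (M1 t))
        + u2 t • cross (act (expm ((σ t * ω) • Smat)) e2)
          (act (expm ((σ t * ω) • Smat)) (M1 t))) I t := by
  intro t ht
  have hR : HasDerivWithinAt (fun s => rotZ (σ s * ω)) ((eps * ω) • (Smat * rotZ (σ t * ω))) I t :=
    (hasDerivAt_rotZ _).scomp_hasDerivWithinAt t ((hσ t ht).mul_const ω)
  simp only [expm_smul_Smat]
  convert hR.act (hM1 t ht) using 1
  rw [(isSO_rotZ _).act_cross, smul_act, mul_act, act_Smat, act_add, act_add, act_smul, act_smul,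
    act_smul, act_rotZ_e3]
  simp only [cross_add_left, cross_smul_left]
  module

/-- The transformation `M₂ = exp(σ(t) ω S) M₁` puts the system
`M₁′ = (u₁e₁ + u₂e₂ + εω e₃) ∧ M₁` (with `σ′ = ε`) in driftless form
`M₂′ = Σᵢ uᵢ [exp(σ(t) ω S) eᵢ] ∧ M₂`. -/
theorem stmt6 (eps : ℝ) (heps : eps = 1 ∨ eps = -1) (ω : ℝ)
    (I : Set ℝ) (hI : I.OrdConnected)
    (u1 u2 : ℝ → ℝ) (σ : ℝ → ℝ)
    (hσ : ∀ t ∈ I, HasDerivWithinAt σ eps I t)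
    (M1 : ℝ → E3)
    (hM1 : ∀ t ∈ I, HasDerivWithinAt M1
      (cross (u1 t • e1 + u2 t • e2 + (eps * ω) • e3) (M1 t)) I t) :
    ∀ t ∈ I, HasDerivWithinAt (fun s => act (expm ((σ s * ω) • Smat)) (M1 s))
      (u1 t • cross (act (expm ((σ t * ω) • Smat)) e1)
          (act (expm ((σ t * ω) • Smat)) (M1 t))
        + u2 t • cross (act (expm ((σ t * ω) • Smat)) e2)
          (act (expm ((σ t * ω) • Smat)) (M1 t))) I t :=
  stmt6_general eps ω I u1 u2 σ hσ M1 hM1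
end
end

section
/- Let m ∈ S² and R ∈ SO(3) with R m = −e₃. Let V := span(e₁, e₂) ⊂ ℝ³ and let P : ℝ³ → V be the orthogonal projection onto V. Then the kernel of the linear map V → V, v ↦ P(R v), equals V ∩ ℝm; consequently, the linear map V → V, v ↦ P(Rᵀ v), is bijective if and only if ⟨m, e₃⟩ ≠ 0. -/
noncomputable section

open scoped RealInnerProductSpace
open Matrix Set Filter

attribute [local instance] Matrix.normedAddCommGroup Matrix.normedSpace

/-- The plane V = span(e₁, e₂) ⊂ ℝ³. -/
def Vplane : Submodule ℝ E3 := Submodule.span ℝ ({e1, e2} : Set E3)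

/-!
Since `Rᵀ = R⁻¹` and the projection `P` onto `V` has kernel `Vᗮ = ℝ e₃`, we get
`P (R v) = 0` iff `v ∈ ℝ Rᵀe₃ = ℝ m`, and `P (Rᵀ v) = 0` iff `v ∈ ℝ Re₃`.
The endomorphism `P ∘ Rᵀ` of the plane `V` is therefore bijective iff the line `ℝ Re₃`
meets `V` only in `0`, i.e. iff `⟨Re₃, e₃⟩ = ⟨e₃, Rᵀe₃⟩ = -⟨e₃, m⟩` is nonzero.
-/

open Submodule

namespace Submodule

variable {𝕜 E : Type*} [RCLike 𝕜] [NormedAddCommGroup E] [InnerProductSpace 𝕜 E]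
  (K : Submodule 𝕜 E) [K.HasOrthogonalProjection] (f : E ≃ₗ[𝕜] E)

theorem orthogonalProjectionOnto_equiv_apply_eq_zero_iff (v : E) :
    K.orthogonalProjectionOnto (f v) = 0 ↔ v ∈ Kᗮ.map (f.symm : E →ₗ[𝕜] E) := by
  rw [orthogonalProjectionOnto_eq_zero_iff, mem_map_equiv, LinearEquiv.symm_symm]

theorem bijective_orthogonalProjectionOnto_equiv_apply_iff [FiniteDimensional 𝕜 K] :
    Function.Bijective (fun v : K ↦ K.orthogonalProjectionOnto (f v)) ↔
      Disjoint K (Kᗮ.map (f.symm : E →ₗ[𝕜] E)) := by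
  let L : K →ₗ[𝕜] K := K.orthogonalProjectionOnto.toLinearMap ∘ₗ f.toLinearMap ∘ₗ K.subtype
  change Function.Bijective L ↔ _
  have bijective_iff_injective : Function.Bijective L ↔ Function.Injective L :=
    ⟨And.left, fun h ↦ ⟨h, LinearMap.injective_iff_surjective.mp h⟩⟩
  rw [bijective_iff_injective, ← LinearMap.ker_eq_bot, LinearMap.ker_eq_bot', disjoint_def]
  refine ⟨fun h v hvK hv ↦ ?_, fun h v hv ↦ Subtype.ext (h v v.2 ?_)⟩
  · exact congrArg Subtype.val
      (h ⟨v, hvK⟩ ((orthogonalProjectionOnto_equiv_apply_eq_zero_iff K f v).mpr hv))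
  · exact (orthogonalProjectionOnto_equiv_apply_eq_zero_iff K f v).mp hv

end Submodule

namespace Matrix

variable {n : Type*} [Fintype n] [DecidableEq n]

theorem inner_toEuclideanLin_left (A : Matrix n n ℝ) (x y : EuclideanSpace ℝ n) :
    ⟪A.toEuclideanLin x, y⟫ = ⟪x, Aᵀ.toEuclideanLin y⟫ := by
  rw [← conjTranspose_eq_transpose_of_trivial, toEuclideanLin_conjTranspose_eq_adjoint,
    LinearMap.adjoint_inner_right]

def toEuclideanLinEquiv (A : Matrix n n ℝ) (hA : Aᵀ * A = 1) :
    EuclideanSpace ℝ n ≃ₗ[ℝ] EuclideanSpace ℝ n :=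
  .ofLinearMap A.toEuclideanLin Aᵀ.toEuclideanLin
    (by rw [← toLpLin_mul_same, mul_eq_one_comm.mp hA, toLpLin_one])
    (by rw [← toLpLin_mul_same, hA, toLpLin_one])

end Matrix

theorem Vplane_eq_orthogonal_span_e3 : Vplane = (ℝ ∙ e3)ᗮ := by
  apply le_antisymm
  · rw [Vplane, span_le]
    rintro _ (rfl | rfl) <;>
      simp [mem_orthogonal_singleton_iff_inner_right, e1, e2, e3,
        EuclideanSpace.inner_single_left]
  · intro x hx
    have hx2 : x 2 = 0 := by
      simpa [e3, EuclideanSpace.inner_single_left] using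
        mem_orthogonal_singleton_iff_inner_right.mp hx
    have hx_eq : x = x 0 • e1 + x 1 • e2 := by
      ext i
      fin_cases i <;> simp [e1, e2, hx2]
    rw [hx_eq]
    exact add_mem (smul_mem _ _ (subset_span (by simp))) (smul_mem _ _ (subset_span (by simp)))

theorem orthogonal_Vplane : Vplaneᗮ = ℝ ∙ e3 := by
  rw [Vplane_eq_orthogonal_span_e3, orthogonal_orthogonal]

theorem disjoint_Vplane_span_singleton_iff {u : E3} (hu : u ≠ 0) :
    Disjoint Vplane (ℝ ∙ u) ↔ ⟪u, e3⟫ ≠ 0 := by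
  rw [disjoint_span_singleton' hu, Vplane_eq_orthogonal_span_e3,
    mem_orthogonal_singleton_iff_inner_left]

theorem stmt11_general (m : E3)
    (R : Matrix (Fin 3) (Fin 3) ℝ) (hR : IsSO R) (hRm : act R m = -e3) :
    (∀ v ∈ Vplane,
      ((Submodule.orthogonalProjectionOnto Vplane (act R v) : E3) = 0 ↔ v ∈ Submodule.span ℝ ({m} : Set E3))) ∧
    (Function.Bijective
        (fun v : Vplane => Submodule.orthogonalProjectionOnto Vplane (act Rᵀ (v : E3)))
      ↔ ⟪m, e3⟫ ≠ 0) := by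
  set f := R.toEuclideanLinEquiv hR.1
  have hRt_e3 : f.symm e3 = -m := by
    rw [← neg_neg e3, ← hRm, map_neg]
    exact congrArg _ (f.symm_apply_apply m)
  constructor
  · intro v _
    rw [ZeroMemClass.coe_eq_zero]
    change Vplane.orthogonalProjectionOnto (f v) = 0 ↔ _
    rw [orthogonalProjectionOnto_equiv_apply_eq_zero_iff, orthogonal_Vplane, map_span,
      Set.image_singleton, LinearEquiv.coe_coe, hRt_e3, ← Set.neg_singleton, span_neg]
  · have hf_e3 : f e3 ≠ 0 := f.map_ne_zero_iff.mpr (by simp [e3])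
    have inner_f_e3 : ⟪f e3, e3⟫ = -⟪m, e3⟫ := by
      rw [show f e3 = R.toEuclideanLin e3 from rfl, R.inner_toEuclideanLin_left,
        show Rᵀ.toEuclideanLin e3 = -m from hRt_e3, inner_neg_right, real_inner_comm]
    change Function.Bijective (fun v : Vplane ↦ Vplane.orthogonalProjectionOnto (f.symm v)) ↔ _
    rw [bijective_orthogonalProjectionOnto_equiv_apply_iff, LinearEquiv.symm_symm,
      orthogonal_Vplane, map_span, Set.image_singleton, LinearEquiv.coe_coe,
      disjoint_Vplane_span_singleton_iff hf_e3, inner_f_e3, neg_ne_zero]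

/-- Key linear-algebra step of Proposition 3: if `R ∈ SO(3)` sends `m ∈ S²` to `−e₃`,
then the kernel of `v ↦ P(Rv)` on V equals `V ∩ ℝm`, and `v ↦ P(Rᵀv)` is bijective on V
iff `⟨m, e₃⟩ ≠ 0`. -/
theorem stmt11 (m : E3) (hm : ‖m‖ = 1)
    (R : Matrix (Fin 3) (Fin 3) ℝ) (hR : IsSO R) (hRm : act R m = -e3) :
    (∀ v ∈ Vplane,
      ((Submodule.orthogonalProjectionOnto Vplane (act R v) : E3) = 0 ↔ v ∈ Submodule.span ℝ ({m} : Set E3))) ∧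
    (Function.Bijective
        (fun v : Vplane => Submodule.orthogonalProjectionOnto Vplane (act Rᵀ (v : E3)))
      ↔ ⟪m, e3⟫ ≠ 0) :=
  stmt11_general m R hR hRm
end
end
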